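/- Let L₁, L₂ : ℝⁿ → ℝ be twice continuously differentiable with negative Hessians F¹, F², let φ₀ ∈ ℝⁿ, and let φ₁, φ₂ be critical points of L₁, L₂ respectively. Assume: (i) ‖∇L₁(φ₀) − ∇L₂(φ₀)‖₂ ≤ C₁; (ii) ‖F¹(φₜ) − F²(φₜ)‖₂ ≤ C₂ for all t ∈ [0,1] where φₜ = φ₀ + t(φ₁ − φ₀); (iii) F²(φ₁) is symmetric and invertible with c = ‖[F²(φ₁)]⁻¹‖₂, and ‖F²(φ̂ₜ) − F²(φ₁)‖₁ ≤ (1 − C₃)/(n c) for all t ∈ [0,1] where φ̂ₜ = φ₁ + t(φ₂ − φ₁) and 0 < C₃ < 1. Then ‖φ₂ − φ₁‖₂ ≤ (c/C₃)(C₁ + C₂ R₀), where R₀ = ‖φ₁ − φ₀‖₂. -/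

import Mathlib

noncomputable def mnorm1 {n : ℕ} (M : Matrix (Fin n) (Fin n) ℝ) : ℝ :=
  ‖LinearMap.toContinuousLinearMap
    (Matrix.toLin (PiLp.basisFun 1 ℝ (Fin n)) (PiLp.basisFun 1 ℝ (Fin n)) M)‖

noncomputable def mnorm2 {n : ℕ} (M : Matrix (Fin n) (Fin n) ℝ) : ℝ :=
  ‖LinearMap.toContinuousLinearMap
    (Matrix.toLin (PiLp.basisFun 2 ℝ (Fin n)) (PiLp.basisFun 2 ℝ (Fin n)) M)‖
noncomputable def toE {n : ℕ} (v : Fin n → ℝ) : EuclideanSpace ℝ (Fin n) :=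
  (WithLp.equiv 2 (Fin n → ℝ)).symm v

open Matrix
open scoped ENNReal

section Aux

variable {n : ℕ}

lemma toLin_basisFun_apply (p : ℝ≥0∞) [Fact (1 ≤ p)] (M : Matrix (Fin n) (Fin n) ℝ)
    (x : PiLp p fun _ : Fin n => ℝ) :
    Matrix.toLin (PiLp.basisFun p ℝ (Fin n)) (PiLp.basisFun p ℝ (Fin n)) M x
      = (WithLp.equiv p _).symm (M.mulVec (WithLp.equiv p _ x)) := by
  rw [Matrix.toLin_apply]
  ext i
  simp [PiLp.basisFun_apply, PiLp.basisFun_repr, Matrix.mulVec, dotProduct,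
    Pi.single_apply, PiLp.smul_apply, mul_comm]

/-- The continuous linear map on Euclidean space associated to a matrix. -/
noncomputable def clm2 {n : ℕ} (M : Matrix (Fin n) (Fin n) ℝ) :
    EuclideanSpace ℝ (Fin n) →L[ℝ] EuclideanSpace ℝ (Fin n) :=
  LinearMap.toContinuousLinearMap
    (Matrix.toLin (PiLp.basisFun 2 ℝ (Fin n)) (PiLp.basisFun 2 ℝ (Fin n)) M)

lemma norm_clm2 (M : Matrix (Fin n) (Fin n) ℝ) : ‖clm2 M‖ = mnorm2 M := rfl

lemma mnorm1_nonneg (M : Matrix (Fin n) (Fin n) ℝ) : 0 ≤ mnorm1 M := norm_nonneg _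

lemma mnorm2_nonneg (M : Matrix (Fin n) (Fin n) ℝ) : 0 ≤ mnorm2 M := norm_nonneg _

lemma clm2_apply (M : Matrix (Fin n) (Fin n) ℝ) (x : EuclideanSpace ℝ (Fin n)) :
    clm2 M x = (WithLp.equiv 2 (Fin n → ℝ)).symm (M.mulVec (WithLp.equiv 2 (Fin n → ℝ) x)) := by
  rw [clm2, LinearMap.coe_toContinuousLinearMap', toLin_basisFun_apply]

lemma mnorm2_sub_comm (A B : Matrix (Fin n) (Fin n) ℝ) :
    mnorm2 (A - B) = mnorm2 (B - A) := by
  rw [← norm_clm2, ← norm_clm2, show A - B = -(B - A) from (neg_sub B A).symm, clm2, clm2,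
    map_neg, map_neg, norm_neg]

lemma clm2_neg_add (X Y : Matrix (Fin n) (Fin n) ℝ) :
    clm2 (-X) + clm2 Y = clm2 (Y - X) := by
  rw [clm2, clm2, clm2, show Y - X = -X + Y from by abel, map_add, map_add]

lemma clm2_sub (X Y : Matrix (Fin n) (Fin n) ℝ) :
    clm2 (X - Y) = clm2 X - clm2 Y := by
  rw [clm2, clm2, clm2, map_sub, map_sub]

lemma clm2_neg (X : Matrix (Fin n) (Fin n) ℝ) : clm2 (-X) = -clm2 X := by
  rw [clm2, clm2, map_neg, map_neg]

lemma norm_one_eq (y : PiLp 1 fun _ : Fin n => ℝ) : ‖y‖ = ∑ i, |y i| := by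
  simp [PiLp.norm_eq_sum (p := 1) (by norm_num), Real.norm_eq_abs]

lemma l2_le_l1 (y : Fin n → ℝ) :
    ‖(WithLp.equiv 2 (Fin n → ℝ)).symm y‖ ≤ ‖(WithLp.equiv 1 (Fin n → ℝ)).symm y‖ := by
  rw [EuclideanSpace.norm_eq, norm_one_eq]
  have h1 : ∀ i : Fin n, ‖((WithLp.equiv 2 (Fin n → ℝ)).symm y) i‖ ^ 2 = |y i| ^ 2 := by
    intro i; simp [Real.norm_eq_abs]
  calc Real.sqrt (∑ i, ‖((WithLp.equiv 2 (Fin n → ℝ)).symm y) i‖ ^ 2)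
      ≤ Real.sqrt ((∑ i, |((WithLp.equiv 1 (Fin n → ℝ)).symm y) i|) ^ 2) := by
        apply Real.sqrt_le_sqrt
        simp only [h1, WithLp.equiv_symm_apply, PiLp.toLp_apply]
        exact Finset.sum_sq_le_sq_sum_of_nonneg (fun i _ => abs_nonneg _)
    _ = ∑ i, |((WithLp.equiv 1 (Fin n → ℝ)).symm y) i| :=
        Real.sqrt_sq (Finset.sum_nonneg fun i _ => abs_nonneg _)

lemma coord_le_l2 (x : EuclideanSpace ℝ (Fin n)) (i : Fin n) : |x i| ≤ ‖x‖ := by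
  rw [EuclideanSpace.norm_eq]
  have h : |x i| = Real.sqrt (‖x i‖ ^ 2) := by
    rw [Real.sqrt_sq_eq_abs]; simp [Real.norm_eq_abs]
  rw [h]
  apply Real.sqrt_le_sqrt
  exact Finset.single_le_sum (f := fun j => ‖x j‖ ^ 2) (fun j _ => sq_nonneg _)
    (Finset.mem_univ i)

lemma mnorm2_le (M : Matrix (Fin n) (Fin n) ℝ) : mnorm2 M ≤ n * mnorm1 M := by
  rw [← norm_clm2, clm2]
  apply ContinuousLinearMap.opNorm_le_bound
  · exact mul_nonneg (Nat.cast_nonneg n) (mnorm1_nonneg M)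
  intro x
  rw [LinearMap.coe_toContinuousLinearMap', toLin_basisFun_apply]
  set v := WithLp.equiv 2 (Fin n → ℝ) x with hv
  calc ‖(WithLp.equiv 2 (Fin n → ℝ)).symm (M.mulVec v)‖
      ≤ ‖(WithLp.equiv 1 (Fin n → ℝ)).symm (M.mulVec v)‖ := l2_le_l1 _
    _ ≤ mnorm1 M * ‖(WithLp.equiv 1 (Fin n → ℝ)).symm v‖ := by
        have h := (LinearMap.toContinuousLinearMap (Matrix.toLin (PiLp.basisFun 1 ℝ (Fin n))
          (PiLp.basisFun 1 ℝ (Fin n)) M)).le_opNorm ((WithLp.equiv 1 (Fin n → ℝ)).symm v)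
        rwa [LinearMap.coe_toContinuousLinearMap', toLin_basisFun_apply,
          Equiv.apply_symm_apply] at h
    _ ≤ mnorm1 M * (n * ‖x‖) := by
        apply mul_le_mul_of_nonneg_left _ (mnorm1_nonneg M)
        rw [norm_one_eq]
        calc (∑ i, |((WithLp.equiv 1 (Fin n → ℝ)).symm v) i|) ≤ ∑ _i : Fin n, ‖x‖ := by
              apply Finset.sum_le_sum
              intro i _
              simpa [hv] using coord_le_l2 x i
          _ = n * ‖x‖ := by simp [Finset.sum_const, nsmul_eq_mul]
    _ = n * mnorm1 M * ‖x‖ := by ring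

lemma grad_diff {L : EuclideanSpace ℝ (Fin n) → ℝ} (hL : ContDiff ℝ 2 L) :
    Differentiable ℝ (gradient L) := by
  have h1 : ContDiff ℝ 1 (fderiv ℝ L) := hL.fderiv_right (by norm_num)
  have h2 : gradient L = fun y =>
      (InnerProductSpace.toDual ℝ (EuclideanSpace ℝ (Fin n))).symm (fderiv ℝ L y) := rfl
  rw [h2]
  exact (InnerProductSpace.toDual ℝ
    (EuclideanSpace ℝ (Fin n))).symm.toContinuousLinearEquiv.differentiable.comp
    (h1.differentiable one_ne_zero)

lemma fderiv_grad_eq {L : EuclideanSpace ℝ (Fin n) → ℝ}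
    {F : EuclideanSpace ℝ (Fin n) → Matrix (Fin n) (Fin n) ℝ}
    (hF : ∀ φ v, toE ((F φ).mulVec v) = -(fderiv ℝ (gradient L) φ (toE v)))
    (φ : EuclideanSpace ℝ (Fin n)) :
    fderiv ℝ (gradient L) φ = clm2 (-(F φ)) := by
  ext w
  have hv : toE (WithLp.equiv 2 (Fin n → ℝ) w) = w := Equiv.symm_apply_apply _ _
  have h := hF φ (WithLp.equiv 2 (Fin n → ℝ) w)
  rw [hv] at h
  rw [clm2_apply, Matrix.neg_mulVec, show ((WithLp.equiv 2 (Fin n → ℝ)).symm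
    (-((F φ).mulVec (WithLp.equiv 2 (Fin n → ℝ) w)))) =
    -toE ((F φ).mulVec (WithLp.equiv 2 (Fin n → ℝ) w)) from rfl, h, neg_neg]

end Aux

/-- Main theorem (Theorem 1 of the paper): two local minima of tasks with similar
gradients at the common initialization and similar Fisher information matrices along
the paths satisfy ‖φ₂ − φ₁‖₂ ≤ (c/C₃)(C₁ + C₂‖φ₁ − φ₀‖₂). -/
theorem stmt7 {n : ℕ} (L₁ L₂ : EuclideanSpace ℝ (Fin n) → ℝ)
    (hL₁ : ContDiff ℝ 2 L₁) (hL₂ : ContDiff ℝ 2 L₂)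
    (F₁ F₂ : EuclideanSpace ℝ (Fin n) → Matrix (Fin n) (Fin n) ℝ)
    -- F^i is the negative Hessian of L_i
    (hF₁ : ∀ φ v, toE ((F₁ φ).mulVec v) = -(fderiv ℝ (gradient L₁) φ (toE v)))
    (hF₂ : ∀ φ v, toE ((F₂ φ).mulVec v) = -(fderiv ℝ (gradient L₂) φ (toE v)))
    (φ₀ φ₁ φ₂ : EuclideanSpace ℝ (Fin n))
    (hcrit₁ : gradient L₁ φ₁ = 0) (hcrit₂ : gradient L₂ φ₂ = 0)
    (C₁ C₂ C₃ c : ℝ) (hC₃0 : 0 < C₃) (hC₃1 : C₃ < 1)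
    -- (i) similar gradients at the initialization
    (hgrad : ‖gradient L₁ φ₀ - gradient L₂ φ₀‖ ≤ C₁)
    -- (ii) similar Fisher information matrices along the path φ₀ → φ₁
    (hFIM : ∀ t ∈ Set.Icc (0:ℝ) 1,
      mnorm2 (F₁ (φ₀ + t • (φ₁ - φ₀)) - F₂ (φ₀ + t • (φ₁ - φ₀))) ≤ C₂)
    -- (iii) F²(φ₁) symmetric and invertible, with little variation along φ₁ → φ₂
    (hsymm : (F₂ φ₁).transpose = F₂ φ₁) (hinv : IsUnit (F₂ φ₁).det)
    (hc : c = mnorm2 (F₂ φ₁)⁻¹)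
    (hvar : ∀ t ∈ Set.Icc (0:ℝ) 1,
      mnorm1 (F₂ (φ₁ + t • (φ₂ - φ₁)) - F₂ φ₁) ≤ (1 - C₃) / ((n : ℝ) * c)) :
    ‖φ₂ - φ₁‖ ≤ (c / C₃) * (C₁ + C₂ * ‖φ₁ - φ₀‖) := by
  have hd₁ : Differentiable ℝ (gradient L₁) := grad_diff hL₁
  have hd₂ : Differentiable ℝ (gradient L₂) := grad_diff hL₂
  have hC₁0 : 0 ≤ C₁ := le_trans (norm_nonneg _) hgrad
  have hC₂0 : 0 ≤ C₂ :=
    le_trans (mnorm2_nonneg _) (hFIM 0 ⟨le_refl 0, zero_le_one⟩)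
  have hc0 : 0 ≤ c := hc ▸ mnorm2_nonneg _
  have hrhs0 : 0 ≤ c / C₃ * (C₁ + C₂ * ‖φ₁ - φ₀‖) :=
    mul_nonneg (div_nonneg hc0 hC₃0.le)
      (add_nonneg hC₁0 (mul_nonneg hC₂0 (norm_nonneg _)))
  -- trivial case n = 0
  rcases Nat.eq_zero_or_pos n with hn | hn
  · subst hn
    have hz : ‖φ₂ - φ₁‖ = 0 := by
      rw [EuclideanSpace.norm_eq]
      simp
    rw [hz]; exact hrhs0
  -- Step 1 : ‖∇L₂(φ₁)‖ ≤ C₁ + C₂ ‖φ₁ - φ₀‖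
  have hstep1 : ‖gradient L₂ φ₁‖ ≤ C₁ + C₂ * ‖φ₁ - φ₀‖ := by
    have hbound : ∀ x ∈ segment ℝ φ₀ φ₁,
        ‖fderiv ℝ (fun y => gradient L₁ y - gradient L₂ y) x‖ ≤ C₂ := by
      intro x hx
      rw [segment_eq_image'] at hx
      obtain ⟨t, ht, rfl⟩ := hx
      rw [fderiv_fun_sub (hd₁ _) (hd₂ _), fderiv_grad_eq hF₁, fderiv_grad_eq hF₂,
        show clm2 (-(F₁ (φ₀ + t • (φ₁ - φ₀)))) - clm2 (-(F₂ (φ₀ + t • (φ₁ - φ₀))))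
          = clm2 (F₂ (φ₀ + t • (φ₁ - φ₀)) - F₁ (φ₀ + t • (φ₁ - φ₀))) from by
            rw [clm2_sub, clm2_neg, clm2_neg, neg_sub_neg],
        norm_clm2, mnorm2_sub_comm]
      exact hFIM t ht
    have hmvt := Convex.norm_image_sub_le_of_norm_fderiv_le
      (fun x _ => (hd₁ x).sub (hd₂ x)) hbound (convex_segment _ _)
      (left_mem_segment ℝ φ₀ φ₁) (right_mem_segment ℝ φ₀ φ₁)
    rw [Pi.sub_apply, Pi.sub_apply, hcrit₁] at hmvt
    have heq : gradient L₂ φ₁ =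
        -((0 - gradient L₂ φ₁) - (gradient L₁ φ₀ - gradient L₂ φ₀))
          - (gradient L₁ φ₀ - gradient L₂ φ₀) := by abel
    calc ‖gradient L₂ φ₁‖
        = ‖-((0 - gradient L₂ φ₁) - (gradient L₁ φ₀ - gradient L₂ φ₀))
          - (gradient L₁ φ₀ - gradient L₂ φ₀)‖ := congrArg norm heq
      _ ≤ ‖-((0 - gradient L₂ φ₁) - (gradient L₁ φ₀ - gradient L₂ φ₀))‖
          + ‖gradient L₁ φ₀ - gradient L₂ φ₀‖ := norm_sub_le _ _
      _ = ‖(0 - gradient L₂ φ₁) - (gradient L₁ φ₀ - gradient L₂ φ₀)‖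
          + ‖gradient L₁ φ₀ - gradient L₂ φ₀‖ := by rw [norm_neg]
      _ ≤ C₂ * ‖φ₁ - φ₀‖ + C₁ := add_le_add hmvt hgrad
      _ = C₁ + C₂ * ‖φ₁ - φ₀‖ := by ring
  -- Step 2 : along the segment φ₁ → φ₂
  set A := clm2 (F₂ φ₁) with hA
  set u := φ₂ - φ₁ with hu
  set K := (n : ℝ) * ((1 - C₃) / ((n : ℝ) * c)) with hK
  have hmvt2 : ‖A u - gradient L₂ φ₁‖ ≤ K * ‖u‖ := by
    have hbound : ∀ x ∈ segment ℝ φ₁ φ₂,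
        ‖fderiv ℝ (fun y => gradient L₂ y + A y) x‖ ≤ K := by
      intro x hx
      rw [segment_eq_image'] at hx
      obtain ⟨t, ht, rfl⟩ := hx
      rw [fderiv_fun_add (hd₂ _) A.differentiableAt, fderiv_grad_eq hF₂,
        ContinuousLinearMap.fderiv, hA, clm2_neg_add, norm_clm2, mnorm2_sub_comm]
      calc mnorm2 (F₂ (φ₁ + t • (φ₂ - φ₁)) - F₂ φ₁)
          ≤ n * mnorm1 (F₂ (φ₁ + t • (φ₂ - φ₁)) - F₂ φ₁) := mnorm2_le _
        _ ≤ K := mul_le_mul_of_nonneg_left (hvar t ht) (Nat.cast_nonneg n)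
    have h := Convex.norm_image_sub_le_of_norm_fderiv_le
      (fun x _ => (hd₂ x).add A.differentiableAt) hbound (convex_segment _ _)
      (left_mem_segment ℝ φ₁ φ₂) (right_mem_segment ℝ φ₁ φ₂)
    have heq : gradient L₂ φ₂ + A φ₂ - (gradient L₂ φ₁ + A φ₁)
        = A u - gradient L₂ φ₁ := by
      rw [hu, map_sub, hcrit₂]; abel
    rwa [Pi.add_apply, Pi.add_apply, heq] at h
  have hBA : ∀ x : EuclideanSpace ℝ (Fin n), clm2 (F₂ φ₁)⁻¹ (A x) = x := by
    intro x
    rw [hA, clm2_apply, clm2_apply, Equiv.apply_symm_apply, Matrix.mulVec_mulVec,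
      Matrix.nonsing_inv_mul _ hinv, Matrix.one_mulVec, Equiv.symm_apply_apply]
  have hu_le : ‖u‖ ≤ c * ‖A u‖ := by
    calc ‖u‖ = ‖clm2 (F₂ φ₁)⁻¹ (A u)‖ := by rw [hBA]
      _ ≤ ‖clm2 (F₂ φ₁)⁻¹‖ * ‖A u‖ := ContinuousLinearMap.le_opNorm _ _
      _ = c * ‖A u‖ := by rw [norm_clm2, ← hc]
  rcases eq_or_lt_of_le hc0 with hceq | hcpos
  · -- c = 0 : then u = 0
    have h0 : ‖u‖ ≤ 0 := by
      rw [← hceq, zero_mul] at hu_le; exact hu_le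
    exact le_trans h0 hrhs0
  · -- c > 0
    have hnne : ((n : ℝ)) ≠ 0 := Nat.cast_ne_zero.mpr hn.ne'
    have hcne : c ≠ 0 := ne_of_gt hcpos
    have hKeq : K = (1 - C₃) / c := by
      rw [hK]; field_simp
    have hAu : ‖A u‖ ≤ ‖gradient L₂ φ₁‖ + (1 - C₃) / c * ‖u‖ := by
      have h1 : ‖A u‖ ≤ ‖A u - gradient L₂ φ₁‖ + ‖gradient L₂ φ₁‖ := by
        have := norm_add_le (A u - gradient L₂ φ₁) (gradient L₂ φ₁)
        rwa [sub_add_cancel] at this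
      rw [hKeq] at hmvt2
      linarith
    have h2 : ‖u‖ ≤ c * ‖gradient L₂ φ₁‖ + (1 - C₃) * ‖u‖ := by
      have h3 : c * ((1 - C₃) / c * ‖u‖) = (1 - C₃) * ‖u‖ := by
        field_simp
      calc ‖u‖ ≤ c * ‖A u‖ := hu_le
        _ ≤ c * (‖gradient L₂ φ₁‖ + (1 - C₃) / c * ‖u‖) :=
            mul_le_mul_of_nonneg_left hAu hc0
        _ = c * ‖gradient L₂ φ₁‖ + (1 - C₃) * ‖u‖ := by rw [mul_add, h3]
    have h4 : C₃ * ‖u‖ ≤ c * (C₁ + C₂ * ‖φ₁ - φ₀‖) := by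
      have := mul_le_mul_of_nonneg_left hstep1 hc0
      linarith
    rw [div_mul_eq_mul_div, le_div_iff₀ hC₃0]
    linarith [h4]
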